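/- arXiv:2505.02488 — 7 statements merged into one kernel-verified Lean document; each statement's English description precedes it below -/
import Mathlib

section
/- Let P be a group all of whose elements have order a power of a prime p, containing an abelian subgroup A of finite index, and let Q < P be any proper subgroup. Then Q is strictly contained in its normalizer N_P(Q). -/
/-!
If `Q` has finite index, pass to the finite `p`-group `P / core(Q)`: it is nilpotent, so it
satisfies the normalizer condition, and this lifts back to `P`. Otherwise let `A₀` be the normal
core of `A` and pick `a ∈ A₀ \ Q`. The centralizer of `a` contains `A₀`, so `a` has only finitely
many `Q`-conjugates; they lie in the abelian group `A₀`, so they generate a finite group `W`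
normalized by `Q`. Then `Q` has finite index in `W ⊔ Q ≠ Q`, and the finite-index case applied
inside the `p`-group `W ⊔ Q` gives an element normalizing `Q` outside `Q`.
-/

open scoped IsMulCommutative

namespace Subgroup

variable {G : Type*} [Group G]

def conjOrbit (Q : Subgroup G) (a : G) : Set G :=
  Set.range fun q : Q ↦ (q : G) * a * (q : G)⁻¹

theorem mem_conjOrbit_self (Q : Subgroup G) (a : G) : a ∈ Q.conjOrbit a :=
  ⟨1, by simp⟩

theorem conjOrbit_subset_of_normal {Q N : Subgroup G} [hN : N.Normal] {a : G} (ha : a ∈ N) :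
    Q.conjOrbit a ⊆ N := by
  rintro _ ⟨q, rfl⟩
  exact hN.conj_mem a ha q

theorem finite_conjOrbit_of_le_centralizer {Q C : Subgroup G} [C.FiniteIndex] {a : G}
    (hC : C ≤ centralizer {a}) : (Q.conjOrbit a).Finite := by
  have : ((centralizer {a}).subgroupOf Q).FiniteIndex :=
    finiteIndex_of_le (H := C.subgroupOf Q) (comap_mono hC)
  have hwd : ∀ q₁ q₂ : Q, (QuotientGroup.leftRel ((centralizer {a}).subgroupOf Q)) q₁ q₂ →
      (q₁ : G) * a * (q₁ : G)⁻¹ = (q₂ : G) * a * (q₂ : G)⁻¹ := by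
    intro q₁ q₂ h
    rw [QuotientGroup.leftRel_apply, mem_subgroupOf, mem_centralizer_singleton_iff] at h
    obtain ⟨c, rfl⟩ : ∃ c, q₂ = q₁ * c := ⟨q₁⁻¹ * q₂, by group⟩
    rw [inv_mul_cancel_left] at h
    simp only [coe_mul, mul_inv_rev]
    rw [mul_assoc (q₁ : G) c, h]
    group
  refine (Set.finite_range fun x : Q ⧸ (centralizer {a}).subgroupOf Q ↦
    Quotient.lift _ hwd x).subset ?_
  rintro _ ⟨q, rfl⟩
  exact ⟨Quotient.mk _ q, rfl⟩

theorem le_normalizer_conjOrbit (Q : Subgroup G) (a : G) : Q ≤ normalizer (Q.conjOrbit a) := by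
  intro q hq h
  constructor
  · rintro ⟨q', rfl⟩
    exact ⟨⟨q, hq⟩ * q', by simp [mul_assoc]⟩
  · rintro ⟨q', hq'⟩
    refine ⟨⟨q, hq⟩⁻¹ * q', ?_⟩
    have : h = q⁻¹ * (q * h * q⁻¹) * q := by group
    rw [this, ← hq']
    simp only [coe_mul, coe_inv]
    group

theorem finite_closure_of_isMulTorsion (hG : IsMulTorsion G) {s : Set G} [Finite s]
    (hs : ∀ x ∈ s, ∀ y ∈ s, x * y = y * x) : Finite (closure s) :=
  have := isMulCommutative_closure hs
  CommGroup.finite_of_fg_isMulTorsion _ (hG.subgroup _)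

theorem finiteIndex_subgroupOf_sup_of_le_normalizer {Q W : Subgroup G} [Finite W]
    (hQW : Q ≤ normalizer (W : Set G)) : (Q.subgroupOf (W ⊔ Q)).FiniteIndex := by
  have hsurj : Function.Surjective fun w : W ↦
      (QuotientGroup.mk (⟨w, le_sup_left (b := Q) w.2⟩ : ↥(W ⊔ Q)) :
        ↥(W ⊔ Q) ⧸ Q.subgroupOf (W ⊔ Q)) := by
    rintro ⟨x, hx⟩
    have hx' : x ∈ ((W ⊔ Q : Subgroup G) : Set G) := hx
    rw [coe_mul_of_right_le_normalizer_left W Q hQW] at hx'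
    obtain ⟨w, hw, q, hq, rfl⟩ := hx'
    exact ⟨⟨w, hw⟩, QuotientGroup.eq.mpr (by simpa [mem_subgroupOf] using hq)⟩
  have := Finite.of_surjective _ hsurj
  exact finiteIndex_of_finite_quotient

theorem lt_normalizer_of_lt_normalizer_subgroupOf {Q H : Subgroup G} (hQH : Q ≤ H)
    (h : Q.subgroupOf H < normalizer (Q.subgroupOf H : Set H)) :
    Q < normalizer (Q : Set G) := by
  rw [← subgroupOf_normalizer_eq hQH] at h
  exact le_normalizer.lt_of_not_ge fun hle ↦ h.not_ge (comap_mono hle)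

theorem comap_lt_normalizer_comap {N : Type*} [Group N] {f : G →* N}
    (hf : Function.Surjective f) {H : Subgroup N} (h : H < normalizer (H : Set N)) :
    H.comap f < normalizer (H.comap f : Set G) := by
  rw [← comap_normalizer_eq_of_surjective H hf]
  exact (comap_lt_comap_of_surjective hf).mpr h

end Subgroup

namespace IsPGroup

open Subgroup

variable {p : ℕ} [Fact p.Prime] {G : Type*} [Group G]

theorem lt_normalizer_of_finiteIndex (hG : IsPGroup p G) {Q : Subgroup G} [Q.FiniteIndex]
    (hQ : Q ≠ ⊤) : Q < normalizer (Q : Set G) := by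
  set π := QuotientGroup.mk' Q.normalCore
  have hQπ : (Q.map π).comap π = Q := by
    rw [comap_map_eq_self]
    simpa [π] using normalCore_le Q
  have : Group.IsNilpotent (G ⧸ Q.normalCore) := (hG.to_quotient _).isNilpotent
  rw [← hQπ]
  refine comap_lt_normalizer_comap (QuotientGroup.mk'_surjective _)
    (Group.normalizerCondition_of_isNilpotent _ (lt_top_iff_ne_top.mpr ?_))
  intro h
  exact hQ (by rw [← hQπ, h, comap_top])

theorem lt_normalizer_of_finite_conjOrbit (hG : IsPGroup p G) {Q : Subgroup G} {a : G}
    (ha : a ∉ Q) (hfin : (Q.conjOrbit a).Finite)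
    (hcomm : ∀ x ∈ Q.conjOrbit a, ∀ y ∈ Q.conjOrbit a, x * y = y * x) :
    Q < normalizer (Q : Set G) := by
  set W := closure (Q.conjOrbit a)
  have := hfin.to_subtype
  have : Finite W :=
    finite_closure_of_isMulTorsion (hG.isOfFinOrder (Fact.out : p.Prime).ne_zero) hcomm
  have : (Q.subgroupOf (W ⊔ Q)).FiniteIndex := finiteIndex_subgroupOf_sup_of_le_normalizer
    ((le_normalizer_conjOrbit Q a).trans (normalizer_le_normalizer_closure _))
  refine lt_normalizer_of_lt_normalizer_subgroupOf (H := W ⊔ Q) le_sup_right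
    ((hG.to_subgroup _).lt_normalizer_of_finiteIndex fun htop ↦ ha ?_)
  have haW : a ∈ W ⊔ Q := mem_sup_left (subset_closure (mem_conjOrbit_self Q a))
  exact mem_subgroupOf.mp (htop ▸ mem_top (⟨a, haW⟩ : ↥(W ⊔ Q)))

end IsPGroup

theorem stmt_2 (p : ℕ) [Fact p.Prime] {P : Type*} [Group P] (hP : IsPGroup p P)
    (A : Subgroup P) (hA : ∀ a ∈ A, ∀ b ∈ A, a * b = b * a) (hAfi : A.FiniteIndex)
    (Q : Subgroup P) (hQ : Q ≠ ⊤) :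
    Q < Subgroup.normalizer (Q : Set P) := by
  by_cases hle : A.normalCore ≤ Q
  · have := Subgroup.finiteIndex_of_le hle
    exact hP.lt_normalizer_of_finiteIndex hQ
  obtain ⟨a, ha, haQ⟩ := SetLike.not_le_iff_exists.mp hle
  have hS : Q.conjOrbit a ⊆ A := (Subgroup.conjOrbit_subset_of_normal ha).trans A.normalCore_le
  have hAa : A ≤ Subgroup.centralizer {a} := fun b hb ↦
    Subgroup.mem_centralizer_singleton_iff.mpr (hA b hb a (A.normalCore_le ha))
  exact hP.lt_normalizer_of_finite_conjOrbit haQ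
    (Subgroup.finite_conjOrbit_of_le_centralizer hAa) fun x hx y hy ↦ hA x (hS hx) y (hS hy)
end

section
/- Let G be a locally finite group and p a prime. If S ≤ G is a maximal p-subgroup of order p, then every p-subgroup of G is finite of order at most p. -/
/-- A group is locally finite if every finitely generated subgroup is finite. -/
def IsLocallyFiniteGroup (G : Type*) [Group G] : Prop :=
  ∀ S : Subgroup G, S.FG → Finite S

/-- A finite subgroup is finitely generated. -/
lemma aux_fg_of_finite {G : Type*} [Group G] (H : Subgroup G) [Finite H] : H.FG := by
  rw [Subgroup.fg_iff]
  exact ⟨(H : Set G), Subgroup.closure_eq H, Set.toFinite _⟩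

/-- Key lemma: any finite p-subgroup has cardinality at most p. -/
lemma aux_key (p : ℕ) [Fact p.Prime] {G : Type*} [Group G]
    (hG : IsLocallyFiniteGroup G) (S : Subgroup G) (hS : Nat.card S = p)
    (hmax : ∀ T : Subgroup G, IsPGroup p T → S ≤ T → T = S)
    (Q : Subgroup G) (hQ : IsPGroup p Q) [Finite Q] : Nat.card Q ≤ p := by
  have hSfin : Finite S := by
    have : 0 < Nat.card S := hS ▸ (Fact.out : p.Prime).pos
    exact Nat.finite_of_card_ne_zero this.ne'
  -- H := S ⊔ Q is finite
  set H : Subgroup G := S ⊔ Q with hH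
  have hHfg : H.FG := by
    rw [Subgroup.fg_iff]
    refine ⟨(S : Set G) ∪ (Q : Set G), ?_, (Set.toFinite _).union (Set.toFinite _)⟩
    rw [Subgroup.closure_union, Subgroup.closure_eq, Subgroup.closure_eq]
  have hHfin : Finite H := hG H hHfg
  have hSle : S ≤ H := le_sup_left
  have hQle : Q ≤ H := le_sup_right
  -- S viewed inside H
  have hSsub : IsPGroup p (S.subgroupOf H) := by
    have hSp : IsPGroup p S := by
      rw [← hS]
      exact IsPGroup.of_card (by rw [pow_one])
    exact hSp.of_equiv (Subgroup.subgroupOfEquivOfLe hSle).symm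
  obtain ⟨T, hT⟩ := hSsub.exists_le_sylow
  -- map T back to G
  have hTmap : IsPGroup p ((T : Subgroup H).map H.subtype) := T.2.map _
  have hSleT : S ≤ (T : Subgroup H).map H.subtype := by
    intro x hx
    exact ⟨⟨x, hSle hx⟩, hT (by simpa [Subgroup.mem_subgroupOf] using hx), rfl⟩
  have hTeq : (T : Subgroup H).map H.subtype = S := hmax _ hTmap hSleT
  have hTcard : Nat.card (T : Subgroup H) = p := by
    have h1 : Nat.card (T : Subgroup H) =
        Nat.card ((T : Subgroup H).map H.subtype) :=
      Nat.card_congr (Subgroup.equivMapOfInjective _ _ H.subtype_injective).toEquiv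
    rw [h1, hTeq, hS]
  -- Q viewed inside H is contained in some Sylow, which has the same card as T
  have hQsub : IsPGroup p (Q.subgroupOf H) :=
    hQ.of_equiv (Subgroup.subgroupOfEquivOfLe hQle).symm
  obtain ⟨T', hT'⟩ := hQsub.exists_le_sylow
  have hT'card : Nat.card (T' : Subgroup H) = p := by
    rw [T'.card_eq_multiplicity, ← T.card_eq_multiplicity, hTcard]
  calc Nat.card Q = Nat.card (Q.subgroupOf H) :=
        (Nat.card_congr (Subgroup.subgroupOfEquivOfLe hQle).toEquiv).symm
    _ ≤ Nat.card (T' : Subgroup H) := Subgroup.card_le_of_le hT'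
    _ = p := hT'card

theorem stmt_9 (p : ℕ) [Fact p.Prime] {G : Type*} [Group G]
    (hG : IsLocallyFiniteGroup G) (S : Subgroup G) (hS : Nat.card S = p)
    (hmax : ∀ T : Subgroup G, IsPGroup p T → S ≤ T → T = S) :
    ∀ P : Subgroup G, IsPGroup p P → Finite P ∧ Nat.card P ≤ p := by
  intro P hP
  have hp : p.Prime := Fact.out
  by_cases hPbot : P = ⊥
  · subst hPbot
    refine ⟨inferInstance, by simpa using hp.one_lt.le⟩
  · obtain ⟨a, ha⟩ := Subgroup.ne_bot_iff_exists_ne_one.mp hPbot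
    set x : G := (a : G) with hxdef
    have hxP : x ∈ P := a.2
    have hx1 : x ≠ 1 := by
      simpa [hxdef] using Subtype.coe_injective.ne_iff.mpr ha
    set Z : Subgroup G := Subgroup.zpowers x with hZ
    have hZle : Z ≤ P := Subgroup.zpowers_le.mpr hxP
    have hZp : IsPGroup p Z := hP.to_le hZle
    have hZfg : Z.FG := by
      rw [Subgroup.fg_iff]
      exact ⟨{x}, (Subgroup.zpowers_eq_closure x).symm, Set.finite_singleton x⟩
    have hZfin : Finite Z := hG Z hZfg
    have hZcard_le : Nat.card Z ≤ p := aux_key p hG S hS hmax Z hZp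
    have hZne : Z ≠ ⊥ := by
      intro h
      exact hx1 (Subgroup.mem_bot.mp (h ▸ Subgroup.mem_zpowers x))
    have hZcard_gt : 1 < Nat.card Z := Subgroup.one_lt_card_iff_ne_bot Z |>.mpr hZne
    have hZcard : Nat.card Z = p := by
      obtain ⟨k, hk⟩ := IsPGroup.iff_card.mp hZp
      rw [hk] at hZcard_le hZcard_gt ⊢
      have hk1 : k = 1 := by
        rcases Nat.lt_or_ge k 1 with h | h
        · interval_cases k
          · simp at hZcard_gt
        · have := Nat.pow_le_pow_right hp.one_lt.le h
          simp only [pow_one] at this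
          have h2 : k ≤ 1 := by
            by_contra hgt
            push_neg at hgt
            have := Nat.pow_lt_pow_right hp.one_lt hgt
            simp only [pow_one] at this
            omega
          omega
      rw [hk1, pow_one]
    have hPle : P ≤ Z := by
      intro y hy
      set R : Subgroup G := Subgroup.closure {x, y} with hR
      have hRle : R ≤ P := by
        rw [hR, Subgroup.closure_le]
        rintro z (rfl | rfl) <;> assumption
      have hRp : IsPGroup p R := hP.to_le hRle
      have hRfg : R.FG := by
        rw [Subgroup.fg_iff]
        exact ⟨{x, y}, rfl, Set.toFinite _⟩
      have hRfin : Finite R := hG R hRfg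
      have hRcard : Nat.card R ≤ p := aux_key p hG S hS hmax R hRp
      have hZleR : Z ≤ R := Subgroup.zpowers_le.mpr
        (Subgroup.subset_closure (Set.mem_insert x {y}))
      have : Z = R := Subgroup.eq_of_le_of_card_ge hZleR (hZcard ▸ hRcard)
      exact this ▸ Subgroup.subset_closure (Set.mem_insert_of_mem x rfl)
    have hPZ : P = Z := le_antisymm hPle hZle
    rw [hPZ]
    exact ⟨hZfin, hZcard.le⟩
end

section
/- Let G be a group, H a normal subgroup, and χ : G → G/H the quotient map. For any subgroup K ≤ G containing H, the functor λ from the orbit category O(K) restricted to subgroups of K, into the undercategory of χ(K) (objects: pairs (L, morphism χ(L) → χ(K)) in O(G/H)), sending L to (L, identity coset morphism), is fully faithful and essentially surjective, hence an equivalence of categories. -/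
open CategoryTheory

/-- The orbit category of a group `G`: objects are the subgroups of `G`, and a
morphism from `H` to `K` is a coset `Kg` with `g H g⁻¹ ≤ K` (equivalently, a
`G`-equivariant map `G/H → G/K`). -/
structure OrbitCat (G : Type*) [Group G] where
  grp : Subgroup G

namespace OrbitCat

variable {G : Type*} [Group G]

/-- Representatives of morphisms `H → K`: elements `g` with `g H g⁻¹ ≤ K`. -/
def Rep (H K : Subgroup G) := {g : G // ∀ h ∈ H, g * h * g⁻¹ ∈ K}

/-- Two representatives give the same morphism iff they lie in the same right
coset of `K`. -/
instance repSetoid (H K : Subgroup G) : Setoid (Rep H K) where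
  r x y := x.1 * y.1⁻¹ ∈ K
  iseqv := by
    constructor
    · intro x
      simp only [mul_inv_cancel]
      exact K.one_mem
    · intro x y h
      have := K.inv_mem h
      simpa [mul_inv_rev] using this
    · intro x y z h1 h2
      have := K.mul_mem h1 h2
      have e : x.1 * y.1⁻¹ * (y.1 * z.1⁻¹) = x.1 * z.1⁻¹ := by group
      rwa [e] at this

instance : Category (OrbitCat G) where
  Hom H K := Quotient (repSetoid H.grp K.grp)
  id H := ⟦⟨1, fun h hh => by simpa using hh⟩⟧
  comp {H K L} f g :=
    Quotient.lift₂ (fun x y =>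
      (⟦⟨y.1 * x.1, fun h hh => by
          have hy := y.2 _ (x.2 h hh)
          have e : y.1 * (x.1 * h * x.1⁻¹) * y.1⁻¹ = y.1 * x.1 * h * (y.1 * x.1)⁻¹ := by
            group
          rwa [e] at hy⟩⟧ : Quotient (repSetoid H.grp L.grp)))
      (fun x y x' y' hx hy => Quotient.sound (by
        have h1 : y.1 * (x.1 * x'.1⁻¹) * y.1⁻¹ ∈ L.grp := y.2 _ hx
        have h2 := L.grp.mul_mem h1 hy
        have e : y.1 * (x.1 * x'.1⁻¹) * y.1⁻¹ * (y.1 * y'.1⁻¹)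
            = y.1 * x.1 * (y'.1 * x'.1)⁻¹ := by group
        rwa [e] at h2)) f g
  id_comp {H K} f := by
    refine Quotient.inductionOn f (fun x => Quotient.sound ?_)
    show x.1 * 1 * x.1⁻¹ ∈ K.grp
    simp only [mul_one, mul_inv_cancel]
    exact K.grp.one_mem
  comp_id {H K} f := by
    refine Quotient.inductionOn f (fun x => Quotient.sound ?_)
    show 1 * x.1 * x.1⁻¹ ∈ K.grp
    simp only [one_mul, mul_inv_cancel]
    exact K.grp.one_mem
  assoc {H K L M} f g h := by
    refine Quotient.inductionOn₃ f g h (fun x y z => Quotient.sound ?_)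
    show z.1 * (y.1 * x.1) * (z.1 * y.1 * x.1)⁻¹ ∈ M.grp
    have e : z.1 * (y.1 * x.1) * (z.1 * y.1 * x.1)⁻¹ = 1 := by group
    rw [e]
    exact M.grp.one_mem

end OrbitCat

namespace OrbitCat

variable {G : Type*} [Group G]

/-- The functor `χ̄ : O(G) → O(G/H)` induced by the quotient map `χ : G → G/H`,
sending a subgroup `L` to `χ(L)` and a morphism `[g]` to `[χ(g)]`. -/
def chibar (H : Subgroup G) [H.Normal] : OrbitCat G ⥤ OrbitCat (G ⧸ H) where
  obj L := ⟨Subgroup.map (QuotientGroup.mk' H) L.grp⟩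
  map {L₁ L₂} f := Quotient.lift
    (fun x => (⟦⟨QuotientGroup.mk' H x.1, by
        rintro h ⟨l, hl, rfl⟩
        exact ⟨x.1 * l * x.1⁻¹, x.2 l hl, by simp⟩⟩⟧ :
      Quotient (repSetoid (Subgroup.map (QuotientGroup.mk' H) L₁.grp)
        (Subgroup.map (QuotientGroup.mk' H) L₂.grp))))
    (fun x y hxy => Quotient.sound (by
      exact ⟨x.1 * y.1⁻¹, hxy, by simp⟩)) f
  map_id L := Quotient.sound (by
    refine ⟨1, L.grp.one_mem, by simp⟩)
  map_comp {L₁ L₂ L₃} f g := by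
    refine Quotient.inductionOn₂ f g (fun x y => Quotient.sound ?_)
    refine ⟨1, L₃.grp.one_mem, ?_⟩
    simp

/-- The inclusion functor `O(K) → O(G)` for a subgroup `K ≤ G`. -/
def incl (K : Subgroup G) : OrbitCat ↥K ⥤ OrbitCat G where
  obj L := ⟨Subgroup.map K.subtype L.grp⟩
  map {L₁ L₂} f := Quotient.lift
    (fun x => (⟦⟨(x.1 : G), by
        rintro h ⟨l, hl, rfl⟩
        exact ⟨x.1 * l * x.1⁻¹, x.2 l hl, by simp⟩⟩⟧ :
      Quotient (repSetoid (Subgroup.map K.subtype L₁.grp)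
        (Subgroup.map K.subtype L₂.grp))))
    (fun x y hxy => Quotient.sound ⟨x.1 * y.1⁻¹, hxy, by simp⟩) f
  map_id L := Quotient.sound (by
    refine ⟨1, L.grp.one_mem, by simp⟩)
  map_comp {L₁ L₂ L₃} f g := by
    refine Quotient.inductionOn₂ f g (fun x y => Quotient.sound ?_)
    refine ⟨1, L₃.grp.one_mem, ?_⟩
    simp

/-- The comparison functor `λ` from the orbit category of `K` to the
overcategory `χ̄ ↓ (K/H)`, sending a subgroup `L ≤ K` to the pair
`(L, [1] : χ(L) → χ(K))`. -/
def lam (H : Subgroup G) [H.Normal] (K : Subgroup G) :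
    OrbitCat ↥K ⥤ CategoryTheory.CostructuredArrow (chibar H)
      ⟨Subgroup.map (QuotientGroup.mk' H) K⟩ where
  obj L := CategoryTheory.CostructuredArrow.mk
    (Y := (incl K).obj L)
    (⟦⟨1, by
      rintro h ⟨l, ⟨l', hl', rfl⟩, rfl⟩
      exact ⟨(l' : G), l'.2, by simp⟩⟩⟧)
  map {L₁ L₂} f := CategoryTheory.CostructuredArrow.homMk ((incl K).map f) (by
    refine Quotient.inductionOn f (fun x => Quotient.sound ?_)
    exact ⟨(x.1 : G), x.1.2, by simp⟩)
  map_id L := by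
    apply CategoryTheory.CostructuredArrow.hom_ext
    simp [Functor.map_id]
  map_comp {L₁ L₂ L₃} f g := by
    apply CategoryTheory.CostructuredArrow.hom_ext
    simp [Functor.map_comp]

end OrbitCat

/-! Since `H ≤ K`, an element `g` lies in `K` as soon as `χ g` lies in `K/H`. A morphism
`(L₁, [1]) → (L₂, [1])` of `χ̄ ↓ (K/H)` is a coset `[g]` with `[χ g] ≫ [1] = [1]`, i.e.
`χ g ∈ K/H`; so `g ∈ K` and the morphism comes from `O(K)`. An object `(M, [χ g])` is
isomorphic, via `[g⁻¹] : g M g⁻¹ → M`, to `(g M g⁻¹, [1])`, and `g M g⁻¹ ≤ K` for the same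
reason. Faithfulness holds because `O(K) → O(G)` is faithful. -/

theorem QuotientGroup.mem_of_mk'_mem_map {G : Type*} [Group G] {H K : Subgroup G} [H.Normal]
    (hHK : H ≤ K) {g : G} (hg : QuotientGroup.mk' H g ∈ K.map (QuotientGroup.mk' H)) :
    g ∈ K := by
  rwa [← Subgroup.comap_map_eq_self (f := QuotientGroup.mk' H) (H := K)
    (by rwa [QuotientGroup.ker_mk'])]

namespace OrbitCat

variable {G : Type*} [Group G]

theorem mk_eq_mk_iff {A B : OrbitCat G} (x y : Rep A.grp B.grp) :
    (⟦x⟧ : A ⟶ B) = ⟦y⟧ ↔ x.1 * y.1⁻¹ ∈ B.grp :=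
  Quotient.eq

def isoOfMapConj {A B : Subgroup G} (g : G) (h : A.map (MulAut.conj g).toMonoidHom = B) :
    (⟨B⟩ : OrbitCat G) ≅ ⟨A⟩ where
  hom := ⟦⟨g⁻¹, fun b hb => by
    rw [← h, Subgroup.mem_map_equiv, MulAut.conj_symm_apply] at hb
    simpa using hb⟩⟧
  inv := ⟦⟨g, fun a ha => h ▸ ⟨a, ha, rfl⟩⟩⟧
  hom_inv_id := (mk_eq_mk_iff _ _).2 <| by simp
  inv_hom_id := (mk_eq_mk_iff _ _).2 <| by simp

instance incl_faithful (K : Subgroup G) : (incl K).Faithful where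
  map_injective := by
    intro _ _ f g
    refine Quotient.inductionOn₂ f g fun x y hxy => (mk_eq_mk_iff x y).2 ?_
    exact (Subgroup.mem_map_iff_mem K.subtype_injective).1 ((mk_eq_mk_iff _ _).1 hxy)

theorem lam_faithful (H : Subgroup G) [H.Normal] (K : Subgroup G) :
    (lam H K).Faithful :=
  Functor.Faithful.of_comp_eq (G := CostructuredArrow.proj _ _) (H := incl K) rfl

theorem lam_full {H K : Subgroup G} [H.Normal] (hHK : H ≤ K) : (lam H K).Full where
  map_surjective {L₁ L₂} t := by
    obtain ⟨f, hf⟩ := Quotient.exists_rep t.left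
    have hfK : f.1 ∈ K := by
      have hw := t.w
      rw [← hf] at hw
      exact QuotientGroup.mem_of_mk'_mem_map hHK (by simpa using (mk_eq_mk_iff _ _).1 hw)
    refine ⟨⟦⟨⟨f.1, hfK⟩, fun l hl => ?_⟩⟧, CostructuredArrow.hom_ext _ _ hf⟩
    exact (Subgroup.mem_map_iff_mem K.subtype_injective).1 (f.2 l ⟨l, hl, rfl⟩)

theorem lam_essSurj {H K : Subgroup G} [H.Normal] (hHK : H ≤ K) : (lam H K).EssSurj where
  mem_essImage X := by
    obtain ⟨⟨y, hy⟩, hX⟩ := Quotient.exists_rep X.hom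
    obtain ⟨g, rfl⟩ := QuotientGroup.mk_surjective y
    set M := X.left.grp.map (MulAut.conj g).toMonoidHom
    have hMK : M ≤ K := by
      rintro _ ⟨m, hm, rfl⟩
      exact QuotientGroup.mem_of_mk'_mem_map hHK (by simpa using hy _ ⟨m, hm, rfl⟩)
    refine ⟨⟨M.subgroupOf K⟩, ⟨CostructuredArrow.isoMk (isoOfMapConj g ?_) ?_⟩⟩
    · rw [Subgroup.subgroupOf_map_subtype, inf_eq_left.2 hMK]
    · rw [← hX]
      exact (mk_eq_mk_iff _ _).2 (by simp)

end OrbitCat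

/-- For a normal subgroup `H ⊴ G` and a subgroup `K` containing `H`, the functor
`λ : O(K) → χ̄ ↓ (K/H)`, `L ↦ (L, [1])`, is fully faithful and essentially
surjective, hence an equivalence of categories. -/
theorem stmt_10 {G : Type*} [Group G] (H : Subgroup G) [H.Normal]
    (K : Subgroup G) (hHK : H ≤ K) :
    (OrbitCat.lam H K).IsEquivalence ∧ (OrbitCat.lam H K).Full ∧
      (OrbitCat.lam H K).Faithful ∧ (OrbitCat.lam H K).EssSurj := by
  have := OrbitCat.lam_full hHK
  have := OrbitCat.lam_faithful H K
  have := OrbitCat.lam_essSurj hHK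
  exact ⟨{ }, ‹_›, ‹_›, ‹_›⟩
end

section
/- Let G be a group, K ≤ G a subgroup, W ⊆ G a set of right coset representatives for K (so G = KW, with the cosets Kw distinct). Then for every subgroup U ≤ K and every subgroup L ≤ G, there is a bijection between Mor_{O(G)}(L, U) = {Ug : g ∈ G, gLg⁻¹ ≤ U} and the disjoint union over w ∈ W with wLw⁻¹ ≤ K of Mor_{O(K)}(wLw⁻¹, U) = {Uh : h ∈ K, h(wLw⁻¹)h⁻¹ ≤ U}, sending Ug with g ∈ Kw to U(gw⁻¹). -/
variable {G : Type*} [Group G]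

/-- The right coset `Ug` as a set. -/
def rcoset (U : Subgroup G) (g : G) : Set G := {x | x * g⁻¹ ∈ U}

/-- The morphism set `Mor_{O(G)}(L, U) = {Ug : g ∈ G, g L g⁻¹ ≤ U}` in the orbit
category of `G`, as a set of cosets. -/
def MorSet (L U : Subgroup G) : Set (Set G) :=
  {s | ∃ g : G, (∀ l ∈ L, g * l * g⁻¹ ∈ U) ∧ s = rcoset U g}

/-- The morphism set `Mor_{O(K)}(L', U) = {Uh : h ∈ K, h L' h⁻¹ ≤ U}` in the
orbit category of the subgroup `K`, as a set of cosets. -/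
def MorSetIn (K L' U : Subgroup G) : Set (Set G) :=
  {s | ∃ h, h ∈ K ∧ (∀ l ∈ L', h * l * h⁻¹ ∈ U) ∧ s = rcoset U h}

lemma rcoset_eq_iff (U : Subgroup G) {g g' : G} :
    rcoset U g = rcoset U g' ↔ g * g'⁻¹ ∈ U := by
  constructor
  · intro h
    have hg : g ∈ rcoset U g := by simp [rcoset, one_mem]
    rw [h] at hg
    exact hg
  · intro h
    ext x
    simp only [rcoset, Set.mem_setOf_eq]
    constructor
    · intro hx
      have := mul_mem hx h
      have e : x * g⁻¹ * (g * g'⁻¹) = x * g'⁻¹ := by group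
      rwa [e] at this
    · intro hx
      have := mul_mem hx (inv_mem h)
      have e : x * g'⁻¹ * (g * g'⁻¹)⁻¹ = x * g⁻¹ := by group
      rwa [e] at this

lemma rcoset_eq_of_mem (U : Subgroup G) {g g' : G} (h : g * g'⁻¹ ∈ U) :
    rcoset U g = rcoset U g' := (rcoset_eq_iff U).2 h

lemma exists_good (K : Subgroup G) (W : Set G)
    (hW : ∀ g : G, ∃! w, w ∈ W ∧ g * w⁻¹ ∈ K)
    (U L : Subgroup G) (hUK : U ≤ K) (m : MorSet L U) :
    ∃ p : (Σ w : {w : G // w ∈ W ∧ Subgroup.map (MulAut.conj w).toMonoidHom L ≤ K},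
          MorSetIn K (Subgroup.map (MulAut.conj (w : G)).toMonoidHom L) U),
      ∀ g : G, (∀ l ∈ L, g * l * g⁻¹ ∈ U) → (m : Set G) = rcoset U g →
        ∀ w ∈ W, g * w⁻¹ ∈ K →
          ((p.1 : G) = w ∧ (p.2 : Set G) = rcoset U (g * w⁻¹)) := by
  obtain ⟨g₀, hg₀L, hg₀⟩ := m.2
  obtain ⟨w₀, ⟨hw₀W, hw₀K⟩, huniq⟩ := hW g₀
  have hmapK : Subgroup.map (MulAut.conj w₀).toMonoidHom L ≤ K := by
    intro x hx
    simp only [Subgroup.mem_map, MulEquiv.coe_toMonoidHom, MulAut.conj_apply] at hx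
    obtain ⟨l, hl, rfl⟩ := hx
    have e : w₀ * l * w₀⁻¹ = (g₀ * w₀⁻¹)⁻¹ * (g₀ * l * g₀⁻¹) * (g₀ * w₀⁻¹) := by group
    rw [e]
    exact mul_mem (mul_mem (inv_mem hw₀K) (hUK (hg₀L l hl))) hw₀K
  have hsmem : rcoset U (g₀ * w₀⁻¹) ∈
      MorSetIn K (Subgroup.map (MulAut.conj w₀).toMonoidHom L) U := by
    refine ⟨g₀ * w₀⁻¹, hw₀K, ?_, rfl⟩
    intro x hx
    simp only [Subgroup.mem_map, MulEquiv.coe_toMonoidHom, MulAut.conj_apply] at hx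
    obtain ⟨l, hl, rfl⟩ := hx
    have e : g₀ * w₀⁻¹ * (w₀ * l * w₀⁻¹) * (g₀ * w₀⁻¹)⁻¹ = g₀ * l * g₀⁻¹ := by group
    rw [e]
    exact hg₀L l hl
  refine ⟨⟨⟨w₀, hw₀W, hmapK⟩, ⟨rcoset U (g₀ * w₀⁻¹), hsmem⟩⟩, ?_⟩
  intro g hgL hm w hwW hwK
  have hgg₀ : g₀ * g⁻¹ ∈ U := (rcoset_eq_iff U).1 (hg₀.symm.trans hm)
  have hw' : g₀ * w⁻¹ ∈ K := by
    have e : g₀ * w⁻¹ = (g₀ * g⁻¹) * (g * w⁻¹) := by group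
    rw [e]
    exact mul_mem (hUK hgg₀) hwK
  have hwe : w = w₀ := huniq w ⟨hwW, hw'⟩
  subst hwe
  refine ⟨rfl, ?_⟩
  apply rcoset_eq_of_mem
  have e : (g₀ * w⁻¹) * (g * w⁻¹)⁻¹ = g₀ * g⁻¹ := by group
  rw [e]
  exact hgg₀

/-- Given a set `W` of right coset representatives for `K ≤ G`, and subgroups
`U ≤ K` and `L ≤ G`, there is a bijection between `Mor_{O(G)}(L, U)` and the
disjoint union over `w ∈ W` with `wLw⁻¹ ≤ K` of `Mor_{O(K)}(wLw⁻¹, U)`,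
sending `Ug` with `g ∈ Kw` to `U(gw⁻¹)`. -/
theorem stmt_11 (K : Subgroup G) (W : Set G)
    (hW : ∀ g : G, ∃! w, w ∈ W ∧ g * w⁻¹ ∈ K)
    (U L : Subgroup G) (hUK : U ≤ K) :
    ∃ e : MorSet L U ≃
        (Σ w : {w : G // w ∈ W ∧ Subgroup.map (MulAut.conj w).toMonoidHom L ≤ K},
          MorSetIn K (Subgroup.map (MulAut.conj (w : G)).toMonoidHom L) U),
      ∀ (m : MorSet L U) (g : G), (∀ l ∈ L, g * l * g⁻¹ ∈ U) →
        (m : Set G) = rcoset U g →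
        ∀ w ∈ W, g * w⁻¹ ∈ K →
          ((e m).1 : G) = w ∧ ((e m).2 : Set G) = rcoset U (g * w⁻¹) := by
  classical
  choose f hf using fun m => exists_good K W hW U L hUK m
  have hinj : Function.Injective f := by
    intro m m' hmm
    obtain ⟨g, hgL, hg⟩ := m.2
    obtain ⟨g', hgL', hg'⟩ := m'.2
    obtain ⟨w, ⟨hwW, hwK⟩, -⟩ := hW g
    obtain ⟨w', ⟨hwW', hwK'⟩, -⟩ := hW g'
    obtain ⟨h1, h2⟩ := hf m g hgL hg w hwW hwK
    obtain ⟨h1', h2'⟩ := hf m' g' hgL' hg' w' hwW' hwK'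
    rw [hmm] at h1 h2
    have hww : w = w' := h1.symm.trans h1'
    subst hww
    have hcos : rcoset U (g * w⁻¹) = rcoset U (g' * w⁻¹) := h2.symm.trans h2'
    have hu : g * g'⁻¹ ∈ U := by
      have e : g * g'⁻¹ = (g * w⁻¹) * (g' * w⁻¹)⁻¹ := by group
      rw [e]
      exact (rcoset_eq_iff U).1 hcos
    apply Subtype.ext
    rw [hg, hg']
    exact rcoset_eq_of_mem U hu
  have hsurj : Function.Surjective f := by
    rintro ⟨⟨w, hwW, hwK⟩, s, hs⟩
    obtain ⟨h, hhK, hhL, hsh⟩ := hs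
    have hgL : ∀ l ∈ L, (h * w) * l * (h * w)⁻¹ ∈ U := by
      intro l hl
      have hwl : w * l * w⁻¹ ∈ Subgroup.map (MulAut.conj w).toMonoidHom L := by
        simp only [Subgroup.mem_map, MulEquiv.coe_toMonoidHom, MulAut.conj_apply]
        exact ⟨l, hl, rfl⟩
      have h2 := hhL _ hwl
      have e : h * (w * l * w⁻¹) * h⁻¹ = (h * w) * l * (h * w)⁻¹ := by group
      rwa [e] at h2
    have hmem : rcoset U (h * w) ∈ MorSet L U := ⟨h * w, hgL, rfl⟩
    set m : MorSet L U := ⟨rcoset U (h * w), hmem⟩ with hmdef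
    refine ⟨m, ?_⟩
    have hK' : (h * w) * w⁻¹ ∈ K := by
      have e : (h * w) * w⁻¹ = h := by group
      rw [e]
      exact hhK
    obtain ⟨h1, h2⟩ := hf m (h * w) hgL rfl w hwW hK'
    rcases hEq : f m with ⟨w1, s1⟩
    rw [hEq] at h1 h2
    have ew1 : w1 = ⟨w, hwW, hwK⟩ := Subtype.ext h1
    subst ew1
    refine Sigma.ext rfl (heq_of_eq (Subtype.ext ?_))
    have h2' : (s1 : Set G) = rcoset U ((h * w) * w⁻¹) := h2
    show (s1 : Set G) = s
    rw [h2', hsh]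
    apply rcoset_eq_of_mem
    have e : ((h * w) * w⁻¹) * h⁻¹ = 1 := by group
    rw [e]
    exact one_mem U
  exact ⟨Equiv.ofBijective f ⟨hinj, hsurj⟩, hf⟩
end

section
/- Define a sequence of finite p-groups by P₀ = C_p and P_{n+1} = P_n ≀ C_p (wreath product with C_p permuting p copies cyclically), with subgroups Q₀ = 1, Q_{n+1} = Q_n ≀ C_p, and A₀ = P₀, A_{n+1} = A_n^{×p} (the p-fold direct product inside the base of the wreath product). Then for each n: A_n is elementary abelian of rank p^n, A_n is normal in P_n, A_n ∩ Q_n = 1, and A_n Q_n = P_n. -/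
/-! By induction on `n`: each property passes from subgroups `A, Q ≤ P` to `A^{×p}` and
`Q ≀ C_p` inside `P ≀ C_p`. The base `A^{×p}` consists of the elements with trivial
`C_p`-component, so exponent, commutativity and order are computed coordinatewise. It is normal
because conjugation acts on the base by coordinatewise conjugation followed by a cyclic shift,
which preserves `A^{×p}` when `A` is normal. Finally `A ∩ Q = 1` and `AQ = P` are checked
coordinatewise on the base, while `Q ≀ C_p` absorbs the `C_p`-component. -/

open Pointwise

variable (p : ℕ) [Fact p.Prime]

/-- The cyclic shift automorphism action of `C_p` on the `p`-fold direct power. -/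
def shiftHom (P : Type) [Group P] : Multiplicative (ZMod p) →* MulAut (ZMod p → P) where
  toFun k :=
    { toFun := fun f j => f (j + k.toAdd)
      invFun := fun f j => f (j - k.toAdd)
      left_inv := fun f => funext fun j => by simp
      right_inv := fun f => funext fun j => by simp
      map_mul' := fun f g => rfl }
  map_one' := by
    refine MulEquiv.ext fun f => funext fun j => ?_
    simp
  map_mul' := by
    intro a b
    refine MulEquiv.ext fun f => funext fun j => ?_
    exact congrArg f (add_assoc j a.toAdd b.toAdd).symm

/-- The sequence of iterated wreath products `P₀ = C_p`, `P_{n+1} = P_n ≀ C_p`. -/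
def Pseq : ℕ → GrpCat
  | 0 => GrpCat.of (Multiplicative (ZMod p))
  | n + 1 => GrpCat.of ((ZMod p → Pseq n) ⋊[shiftHom p (Pseq n)] Multiplicative (ZMod p))

/-- The subgroups `Q₀ = 1`, `Q_{n+1} = Q_n ≀ C_p`. -/
def Qseq : ∀ n, Subgroup (Pseq p n)
  | 0 => ⊥
  | n + 1 =>
    { carrier := {x : (ZMod p → Pseq p n) ⋊[shiftHom p (Pseq p n)] Multiplicative (ZMod p) |
        ∀ j, x.left j ∈ Qseq n}
      one_mem' := fun j => (Qseq n).one_mem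
      mul_mem' := fun {a b} ha hb j => (Qseq n).mul_mem (ha j) (hb (j + a.right.toAdd))
      inv_mem' := fun {a} ha j => (Qseq n).inv_mem (ha (j + a.right⁻¹.toAdd)) }

/-- The subgroups `A₀ = P₀`, `A_{n+1} = A_n^{×p}` inside the base of the wreath
product. -/
def Aseq : ∀ n, Subgroup (Pseq p n)
  | 0 => ⊤
  | n + 1 => Subgroup.map
      (SemidirectProduct.inl :
        (ZMod p → Pseq p n) →* (ZMod p → Pseq p n) ⋊[shiftHom p (Pseq p n)] Multiplicative (ZMod p))
      (Subgroup.pi Set.univ (fun _ : ZMod p => Aseq n))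

/- `Pseq p (n + 1)`, `Aseq p (n + 1)` and `Qseq p (n + 1)` are definitionally
`Wreath p (Pseq p n)`, `baseSubgroup p (Aseq p n)` and `wreathSubgroup p (Qseq p n)`, so the
inductive steps apply the lemmas about these directly. -/

abbrev Wreath (P : Type) [Group P] : Type :=
  (ZMod p → P) ⋊[shiftHom p P] Multiplicative (ZMod p)

section Wreath

variable {P : Type} [Group P]

def baseSubgroup (A : Subgroup P) : Subgroup (Wreath p P) :=
  (Subgroup.pi Set.univ fun _ => A).map SemidirectProduct.inl

def wreathSubgroup (Q : Subgroup P) : Subgroup (Wreath p P) where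
  carrier := {x | ∀ j, x.left j ∈ Q}
  one_mem' _ := Q.one_mem
  mul_mem' {a _} ha hb j := Q.mul_mem (ha j) (hb (j + a.right.toAdd))
  inv_mem' {a} ha j := Q.inv_mem (ha (j + a.right⁻¹.toAdd))

variable {p}

lemma mem_baseSubgroup {A : Subgroup P} {x : Wreath p P} :
    x ∈ baseSubgroup p A ↔ x.right = 1 ∧ ∀ j, x.left j ∈ A := by
  constructor
  · rintro ⟨f, hf, rfl⟩
    exact ⟨rfl, fun j => hf j (Set.mem_univ j)⟩
  · rintro ⟨hr, hl⟩
    exact ⟨x.left, fun j _ => hl j, SemidirectProduct.ext rfl hr.symm⟩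

lemma pow_eq_one_of_mem_baseSubgroup {A : Subgroup P} {k : ℕ} (hA : ∀ a ∈ A, a ^ k = 1) :
    ∀ x ∈ baseSubgroup p A, x ^ k = 1 := by
  rintro _ ⟨f, hf, rfl⟩
  rw [← map_pow, show f ^ k = 1 from funext fun j => hA _ (hf j trivial), map_one]

lemma mul_comm_of_mem_baseSubgroup {A : Subgroup P} (hA : ∀ a ∈ A, ∀ b ∈ A, a * b = b * a) :
    ∀ x ∈ baseSubgroup p A, ∀ y ∈ baseSubgroup p A, x * y = y * x := by
  rintro _ ⟨f, hf, rfl⟩ _ ⟨g, hg, rfl⟩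
  have hfg : f * g = g * f := funext fun j => hA _ (hf j trivial) _ (hg j trivial)
  rw [← map_mul, ← map_mul, hfg]

lemma card_baseSubgroup (A : Subgroup P) : Nat.card (baseSubgroup p A) = Nat.card A ^ p := by
  let e : Subgroup.pi Set.univ (fun _ : ZMod p => A) ≃ (ZMod p → A) :=
    { toFun f j := ⟨f.1 j, f.2 j trivial⟩
      invFun f := ⟨fun j => f j, fun j _ => (f j).2⟩ }
  rw [baseSubgroup, Subgroup.card_map_of_injective SemidirectProduct.inl_injective,
    Nat.card_congr e, Nat.card_fun, Nat.card_zmod]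

instance baseSubgroup_normal (A : Subgroup P) [A.Normal] : (baseSubgroup p A).Normal where
  conj_mem x hx g := by
    obtain ⟨hr, hl⟩ := mem_baseSubgroup.mp hx
    refine mem_baseSubgroup.mpr ⟨by simp [hr], fun j => ?_⟩
    show g.left j * x.left (j + g.right.toAdd) *
      (g.left (j + (g.right * x.right).toAdd + g.right⁻¹.toAdd))⁻¹ ∈ A
    simpa [hr] using ‹A.Normal›.conj_mem _ (hl _) (g.left j)

lemma baseSubgroup_inf_wreathSubgroup {A Q : Subgroup P} (h : A ⊓ Q = ⊥) :
    baseSubgroup p A ⊓ wreathSubgroup p Q = ⊥ := by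
  refine eq_bot_iff.mpr fun x hx => ?_
  obtain ⟨⟨hr, hA⟩, hQ⟩ := And.imp_left mem_baseSubgroup.mp (Subgroup.mem_inf.mp hx)
  have hl : ∀ j, x.left j = 1 := fun j => by
    simpa [h] using Subgroup.mem_inf.mpr ⟨hA j, hQ j⟩
  exact Subgroup.mem_bot.mpr (SemidirectProduct.ext (funext hl) hr)

lemma baseSubgroup_mul_wreathSubgroup {A Q : Subgroup P}
    (h : (A : Set P) * (Q : Set P) = Set.univ) :
    (baseSubgroup p A : Set (Wreath p P)) * (wreathSubgroup p Q : Set (Wreath p P)) = Set.univ := by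
  refine Set.eq_univ_of_forall fun x => ?_
  have hx : ∀ j, ∃ a ∈ A, ∃ b ∈ Q, a * b = x.left j := fun j =>
    Set.mem_mul.mp (h ▸ Set.mem_univ (x.left j))
  choose a ha b hb hab using hx
  refine Set.mem_mul.mpr ⟨SemidirectProduct.inl a, mem_baseSubgroup.mpr ⟨rfl, ha⟩,
    ⟨b, x.right⟩, hb, SemidirectProduct.ext ?_ (one_mul _)⟩
  simpa using (funext hab : a * b = x.left)

end Wreath

lemma card_Pseq_zero : Nat.card (Pseq p 0) = p := Nat.card_zmod p

lemma pow_eq_one_of_mem_Aseq (n : ℕ) : ∀ x ∈ Aseq p n, x ^ p = 1 := by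
  induction n with
  | zero =>
    intro x _
    simpa only [card_Pseq_zero] using pow_card_eq_one' (x := x)
  | succ n ih => exact pow_eq_one_of_mem_baseSubgroup ih

lemma mul_comm_of_mem_Aseq (n : ℕ) : ∀ x ∈ Aseq p n, ∀ y ∈ Aseq p n, x * y = y * x := by
  induction n with
  | zero => exact fun x _ y _ => mul_comm (G := Multiplicative (ZMod p)) x y
  | succ n ih => exact mul_comm_of_mem_baseSubgroup ih

lemma card_Aseq (n : ℕ) : Nat.card (Aseq p n) = p ^ p ^ n := by
  induction n with
  | zero => exact Subgroup.card_top.trans ((card_Pseq_zero p).trans (pow_one p).symm)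
  | succ n ih => exact (card_baseSubgroup (Aseq p n)).trans (by rw [ih, ← pow_mul, ← pow_succ])

instance Aseq_normal (n : ℕ) : (Aseq p n).Normal := by
  induction n with
  | zero => exact Subgroup.normal_top (G := Pseq p 0)
  | succ n ih => exact baseSubgroup_normal (Aseq p n)

lemma Aseq_inf_Qseq (n : ℕ) : Aseq p n ⊓ Qseq p n = ⊥ := by
  induction n with
  | zero => exact inf_bot_eq _
  | succ n ih => exact baseSubgroup_inf_wreathSubgroup (A := Aseq p n) ih

lemma Aseq_mul_Qseq (n : ℕ) :
    (Aseq p n : Set (Pseq p n)) * (Qseq p n : Set (Pseq p n)) = Set.univ := by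
  induction n with
  | zero => simp [Aseq, Qseq]
  | succ n ih => exact baseSubgroup_mul_wreathSubgroup (A := Aseq p n) ih

/-- For each `n`: `A_n` is elementary abelian of rank `p^n` (i.e. abelian of
exponent `p` and order `p^(p^n)`), `A_n` is normal in `P_n`, `A_n ∩ Q_n = 1`,
and `A_n Q_n = P_n`. -/
theorem stmt_12 (n : ℕ) :
    (∀ x ∈ Aseq p n, x ^ p = 1) ∧
    (∀ x ∈ Aseq p n, ∀ y ∈ Aseq p n, x * y = y * x) ∧
    Nat.card (Aseq p n) = p ^ (p ^ n) ∧
    (Aseq p n).Normal ∧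
    Aseq p n ⊓ Qseq p n = ⊥ ∧
    ((Aseq p n : Set (Pseq p n)) * (Qseq p n : Set (Pseq p n)) = Set.univ) :=
  ⟨pow_eq_one_of_mem_Aseq p n, mul_comm_of_mem_Aseq p n, card_Aseq p n, Aseq_normal p n,
    Aseq_inf_Qseq p n, Aseq_mul_Qseq p n⟩
end

section
/- Let P be the colimit of the sequence of iterated wreath products P₀ = C_p, P_{n+1} = P_n ≀ C_p, along the injections φ_n : P_n → P_{n+1} defined by φ_n(g) = (g,1,...,1) for n odd and φ_n(g) = (g,g,...,g) for n even. Then P has trivial center: Z(P) = 1. -/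
open Pointwise

variable (p : ℕ) [Fact p.Prime]

/-- The diagonal homomorphism `g ↦ (g,g,…,g)`. -/
def diagHom (P : Type) [Group P] : P →* (ZMod p → P) where
  toFun g _ := g
  map_one' := rfl
  map_mul' _ _ := rfl

/-- The connecting maps `φ_n : P_n → P_{n+1}`, given by `g ↦ (g,1,…,1)` for `n`
odd and `g ↦ (g,g,…,g)` for `n` even, landing in the base of the wreath
product. -/
def phi : ∀ n : ℕ, Pseq p n →* Pseq p (n + 1) := fun n =>
  (SemidirectProduct.inl :
      (ZMod p → Pseq p n) →* (ZMod p → Pseq p n) ⋊[shiftHom p (Pseq p n)]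
        Multiplicative (ZMod p)).comp
    (if n % 2 = 1 then MonoidHom.mulSingle (fun _ : ZMod p => Pseq p n) 0
     else diagHom p (Pseq p n))

/-! An element of `P` already lives at an odd stage `m`, where `φ_m` embeds it as
`(a, 1, …, 1)` in the base of `P_{m+1}`. If it is central in `P`, then by injectivity of
`P_{m+1} → P` it is central in `P_{m+1}`, so it commutes with the cyclic shift generator;
but conjugating by the shift moves `(a, 1, …, 1)` to `(1, a, 1, …, 1)`, forcing `a = 1`. -/

theorem MonoidHom.mem_center_of_injective {G H : Type*} [Group G] [Group H] {f : G →* H}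
    (hf : Function.Injective f) {x : G} (hx : f x ∈ Subgroup.center H) :
    x ∈ Subgroup.center G :=
  Subgroup.mem_center_iff.mpr fun y =>
    hf <| by rw [map_mul, map_mul, Subgroup.mem_center_iff.mp hx]

theorem shiftHom_apply {G : Type} [Group G] (k : Multiplicative (ZMod p)) (f : ZMod p → G)
    (j : ZMod p) : shiftHom p G k f j = f (j + k.toAdd) :=
  rfl

theorem eq_one_of_commute_inl_mulSingle_inr {G : Type} [Group G] {a : G}
    (h : Commute
      (SemidirectProduct.inl (Pi.mulSingle 0 a) : (ZMod p → G) ⋊[shiftHom p G] _)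
      (SemidirectProduct.inr (Multiplicative.ofAdd 1))) :
    a = 1 := by
  have : Fact (1 < p) := ⟨(Fact.out : p.Prime).one_lt⟩
  have hleft := congrFun (congrArg SemidirectProduct.left h.eq) 0
  simp only [SemidirectProduct.mul_left, SemidirectProduct.left_inl,
    SemidirectProduct.left_inr, SemidirectProduct.right_inr, map_one, mul_one, one_mul,
    Pi.mul_apply, Pi.one_apply, shiftHom_apply, toAdd_ofAdd, zero_add] at hleft
  rwa [Pi.mulSingle_eq_same, Pi.mulSingle_eq_of_ne one_ne_zero] at hleft

theorem phi_of_odd {n : ℕ} (hn : n % 2 = 1) (g : Pseq p n) :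
    phi p n g = SemidirectProduct.inl (Pi.mulSingle 0 g) := by
  simp only [phi, if_pos hn]
  rfl

theorem eq_one_of_phi_mem_center {m : ℕ} (hm : m % 2 = 1) {a : Pseq p m}
    (ha : phi p m a ∈ Subgroup.center (Pseq p (m + 1))) : a = 1 := by
  refine eq_one_of_commute_inl_mulSingle_inr p ?_
  rw [← phi_of_odd p hm]
  exact Subgroup.mem_center_iff.mp ha _ |>.symm

theorem exists_odd_stage_eq {P : Type} [Group P] {ψ : ∀ n, Pseq p n →* P}
    (hcompat : ∀ n g, ψ (n + 1) (phi p n g) = ψ n g) (n : ℕ) (g : Pseq p n) :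
    ∃ m, m % 2 = 1 ∧ ∃ a : Pseq p m, ψ m a = ψ n g := by
  rcases Nat.mod_two_eq_zero_or_one n with hn | hn
  · exact ⟨n + 1, by omega, phi p n g, hcompat n g⟩
  · exact ⟨n, hn, g, rfl⟩

/-- If `P` is a colimit of the sequence of iterated wreath products `P_n` along
the injections `φ_n` (i.e. `P` is the increasing union of the images of the
`P_n`), then `P` has trivial center. -/
theorem stmt_13 (P : Type) [Group P] (ψ : ∀ n, Pseq p n →* P)
    (hcompat : ∀ n g, ψ (n + 1) (phi p n g) = ψ n g)
    (hinj : ∀ n, Function.Injective (ψ n))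
    (hsurj : ∀ x : P, ∃ n g, ψ n g = x) :
    Subgroup.center P = ⊥ := by
  refine (Subgroup.eq_bot_iff_forall _).mpr fun z hz => ?_
  obtain ⟨n, g, rfl⟩ := hsurj z
  obtain ⟨m, hm, a, ha⟩ := exists_odd_stage_eq p hcompat n g
  rw [← ha, ← hcompat] at hz
  have hcentral := (ψ (m + 1)).mem_center_of_injective (hinj _) hz
  rw [← ha, eq_one_of_phi_mem_center p hm hcentral, map_one]
end

section
/- Let P be a group with trivial center and suppose every element of P has p-power order and P is locally finite. Then P has no nontrivial finite normal subgroup. -/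
theorem stmt_15 (p : ℕ) [Fact p.Prime] {P : Type*} [Group P] (hP : IsPGroup p P)
    (hlf : IsLocallyFiniteGroup P) (hZ : Subgroup.center P = ⊥) :
    ∀ N : Subgroup P, N.Normal → Finite N → N = ⊥ := by
  intro N hN hfin
  by_contra hne
  letI : MulAction P N := MulAction.compHom N (MulAut.conjNormal (H := N))
  have hsmul : ∀ (g : P) (n : N), ((g • n : N) : P) = g * n * g⁻¹ := fun g n =>
    MulAut.conjNormal_apply g n
  -- fixed points of the conjugation action are central, hence trivial
  have hfix : ∀ x ∈ MulAction.fixedPoints P N, x = (1 : N) := by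
    intro x hx
    have hxc : (x : P) ∈ Subgroup.center P := by
      rw [Subgroup.mem_center_iff]
      intro g
      have h2 : (g * x * g⁻¹ : P) = x := by
        rw [← hsmul g x, hx g]
      calc g * (x : P) = g * x * g⁻¹ * g := by group
        _ = x * g := by rw [h2]
    rw [hZ, Subgroup.mem_bot] at hxc
    exact Subtype.ext hxc
  have hfixsub : MulAction.fixedPoints P N = {(1 : N)} := by
    apply Set.eq_singleton_iff_unique_mem.mpr
    constructor
    · intro g
      apply Subtype.ext
      rw [hsmul g 1]
      simp
    · exact hfix
  have hcardfix : Nat.card (MulAction.fixedPoints P N) = 1 := by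
    rw [hfixsub]; simp
  have hmod := hP.card_modEq_card_fixedPoints N
  rw [hcardfix] at hmod
  -- N is a nontrivial finite p-group, so p divides its cardinality
  haveI : Nontrivial N := N.nontrivial_iff_ne_bot.mpr hne
  obtain ⟨n, hn0, hn⟩ := (hP.to_subgroup N).nontrivial_iff_card.mp inferInstance
  have hdvd : p ∣ Nat.card N := hn ▸ dvd_pow_self p hn0.ne'
  have h0 : Nat.card N % p = 0 := Nat.mod_eq_zero_of_dvd hdvd
  have h1 : (1 : ℕ) % p = 1 := Nat.mod_eq_of_lt (Fact.out (p := p.Prime)).one_lt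
  have : (0 : ℕ) = 1 := by rw [← h0, ← h1]; exact hmod
  exact one_ne_zero this.symm
end
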